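/- With notation as above (basis x₁,…,x_r of L over K with Gram matrix E_{n,r−n}, map α determined by the matrix z, λ_i = x_{n+i}⊗1 − Σ_k x_k⊗z_{ki} spanning Ker α): the restriction of −H_{L,C} to Ker α is positive definite if and only if Eₙ − z z̄ᵗ is positive definite Hermitian, i.e. if and only if z lies in the Siegel domain H³_{n,r−n}. -/

import Mathlib

/-!
In the coordinates given by `x`, the vectors of `Ker α` are exactly those with coordinates
`(-z q, q)`, and on such a vector `-H` takes the value `‖q‖² - ‖z q‖²`. Positivity of `-H` on
`Ker α` therefore says that `1 - zᴴ z` is positive definite. Finally `1 - zᴴ z` and `1 - z zᴴ`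
are positive definite together: both are Schur complements in `[[1, z], [zᴴ, 1]]`, and they have
the same determinant.
-/

open Complex
open scoped ComplexOrder

section SesquilinearForm

variable {R W : Type*} [CommRing R] [StarRing R] [AddCommGroup W] [Module R W]

def sesqFormOfHermitian (H : W → W → R) (Hadd : ∀ u v w : W, H (u + v) w = H u w + H v w)
    (Hsmul : ∀ (c : R) (v w : W), H (c • v) w = c * H v w)
    (Hherm : ∀ v w : W, H w v = starRingEnd R (H v w)) : W →ₗ[R] W →ₗ⋆[R] R :=
  LinearMap.mk₂'ₛₗ (RingHom.id R) (starRingEnd R) H Hadd Hsmul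
    (fun u v w => by rw [Hherm, Hadd, map_add, ← Hherm, ← Hherm])
    (fun c v w => by rw [Hherm, Hsmul, map_mul, ← Hherm]; rfl)

@[simp]
theorem sesqFormOfHermitian_apply (H : W → W → R) (Hadd Hsmul Hherm) (v w : W) :
    sesqFormOfHermitian H Hadd Hsmul Hherm v w = H v w :=
  rfl

theorem LinearMap.apply_self_eq_sum_of_toMatrix₂_eq_diagonal {ι : Type*} [Fintype ι]
    [DecidableEq ι] {B : W →ₗ[R] W →ₗ⋆[R] R} {b : Module.Basis ι R W} {d : ι → R}
    (hB : LinearMap.toMatrix₂ b b B = Matrix.diagonal d) (v : W) :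
    B v v = ∑ i, d i * (star (b.repr v i) * b.repr v i) := by
  rw [apply_eq_dotProduct_toMatrix₂_mulVec b b, hB]
  refine Finset.sum_congr rfl fun i _ => ?_
  simp only [Matrix.mulVec_diagonal, Function.comp_apply, RingHom.id_apply, starRingEnd_apply]
  ring

end SesquilinearForm

namespace Matrix

variable {𝕜 : Type*} [RCLike 𝕜] {m n : Type*} [Fintype m] [Fintype n] [DecidableEq n]

theorem posDef_one_sub_conjTranspose_mul_self_iff (A : Matrix m n 𝕜) :
    (1 - Aᴴ * A).PosDef ↔ ∀ v : n → 𝕜, v ≠ 0 → star (A *ᵥ v) ⬝ᵥ (A *ᵥ v) < star v ⬝ᵥ v := by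
  have hform (v : n → 𝕜) :
      star v ⬝ᵥ ((1 - Aᴴ * A) *ᵥ v) = star v ⬝ᵥ v - star (A *ᵥ v) ⬝ᵥ (A *ᵥ v) := by
    rw [sub_mulVec, one_mulVec, dotProduct_sub, ← mulVec_mulVec, dotProduct_mulVec, ← star_mulVec]
  simp only [posDef_iff_dotProduct_mulVec, hform, sub_pos,
    (isHermitian_one.sub (isHermitian_conjTranspose_mul_self A)), true_and]

theorem posDef_one_sub_mul_conjTranspose_iff [DecidableEq m] (A : Matrix m n 𝕜) :
    (1 - A * Aᴴ).PosDef ↔ (1 - Aᴴ * A).PosDef := by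
  have hsemidef : (1 - A * Aᴴ).PosSemidef ↔ (1 - Aᴴ * A).PosSemidef := by
    let : Invertible (1 : Matrix m m 𝕜) := invertibleOne
    let : Invertible (1 : Matrix n n 𝕜) := invertibleOne
    have h₁₁ := PosDef.one.fromBlocks₁₁ A (1 : Matrix n n 𝕜)
    have h₂₂ := PosDef.one.fromBlocks₂₂ (1 : Matrix m m 𝕜) A
    simp only [inv_one, Matrix.mul_one] at h₁₁ h₂₂
    rw [← h₁₁, h₂₂]
  refine ⟨fun h => ?_, fun h => ?_⟩
  · rw [(hsemidef.mp h.posSemidef).posDef_iff_det_ne_zero, ← det_one_sub_mul_comm]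
    exact h.det_pos.ne'
  · rw [(hsemidef.mpr h.posSemidef).posDef_iff_det_ne_zero, det_one_sub_mul_comm]
    exact h.det_pos.ne'

end Matrix

section Kernel

variable {R W V ι κ : Type*} [CommRing R] [AddCommGroup W] [Module R W] [AddCommGroup V]
  [Module R V] [Fintype ι] [Fintype κ] (x : Module.Basis (ι ⊕ κ) R W) (z : Matrix ι κ R)

open Matrix

theorem apply_eq_sum_of_apply_basis_inr {α : W →ₗ[R] V}
    (hz : ∀ i, α (x (Sum.inr i)) = ∑ k, z k i • α (x (Sum.inl k))) (v : W) :
    α v = ∑ k, (x.repr v ∘ Sum.inl + z *ᵥ (x.repr v ∘ Sum.inr)) k • α (x (Sum.inl k)) := by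
  conv_lhs => rw [← x.sum_repr v, Fintype.sum_sum_type]
  simp only [map_add, map_sum, map_smul, hz, Finset.smul_sum, smul_smul, Pi.add_apply, add_smul,
    Finset.sum_add_distrib, mulVec, dotProduct, Finset.sum_smul, Function.comp_apply]
  rw [Finset.sum_comm]
  simp only [mul_comm]

theorem mem_ker_iff_repr_inl_eq {α : W →ₗ[R] V}
    (hz : ∀ i, α (x (Sum.inr i)) = ∑ k, z k i • α (x (Sum.inl k)))
    (hind : LinearIndependent R fun k => α (x (Sum.inl k))) (v : W) :
    v ∈ LinearMap.ker α ↔ x.repr v ∘ Sum.inl = -(z *ᵥ (x.repr v ∘ Sum.inr)) := by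
  rw [LinearMap.mem_ker, apply_eq_sum_of_apply_basis_inr x z hz, eq_neg_iff_add_eq_zero]
  refine ⟨fun h => funext (Fintype.linearIndependent_iff.mp hind _ h), fun h => ?_⟩
  simp only [h, Pi.zero_apply, zero_smul, Finset.sum_const_zero]

/-- `∑ i, q i • λ i`, where `λ i = x (inr i) - ∑ k, z k i • x (inl k)` spans the kernel. -/
noncomputable def kerVec (q : κ → R) : W :=
  x.equivFun.symm (Sum.elim (-(z *ᵥ q)) q)

@[simp]
theorem repr_kerVec (q : κ → R) : ⇑(x.repr (kerVec x z q)) = Sum.elim (-(z *ᵥ q)) q := by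
  rw [kerVec, ← x.equivFun_apply, LinearEquiv.apply_symm_apply]

theorem forall_mem_ker_ne_zero_iff {α : W →ₗ[R] V}
    (hz : ∀ i, α (x (Sum.inr i)) = ∑ k, z k i • α (x (Sum.inl k)))
    (hind : LinearIndependent R fun k => α (x (Sum.inl k))) (P : W → Prop) :
    (∀ v ∈ LinearMap.ker α, v ≠ 0 → P v) ↔ ∀ q : κ → R, q ≠ 0 → P (kerVec x z q) := by
  have eq_kerVec (v) (hv : v ∈ LinearMap.ker α) : v = kerVec x z (x.repr v ∘ Sum.inr) := by
    refine x.equivFun.injective (funext fun a => ?_)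
    rw [mem_ker_iff_repr_inl_eq x z hz hind] at hv
    rcases a with k | i
    · simpa using congrFun hv k
    · simp
  refine ⟨fun h q hq => h _ ?_ fun h0 => hq ?_, fun h v hv hv0 => ?_⟩
  · simp [mem_ker_iff_repr_inl_eq x z hz hind]
  · funext i
    simpa [h0] using (congrFun (repr_kerVec x z q) (Sum.inr i)).symm
  · rw [eq_kerVec v hv]
    refine h _ fun hq => hv0 ?_
    rw [eq_kerVec v hv, hq]
    simp [kerVec]

theorem apply_kerVec_self [StarRing R] [DecidableEq ι] [DecidableEq κ]
    {B : W →ₗ[R] W →ₗ⋆[R] R}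
    (hB : LinearMap.toMatrix₂ x x B = diagonal (Sum.elim (fun _ => 1) (fun _ => -1)))
    (q : κ → R) :
    B (kerVec x z q) (kerVec x z q) = star (z *ᵥ q) ⬝ᵥ (z *ᵥ q) - star q ⬝ᵥ q := by
  rw [LinearMap.apply_self_eq_sum_of_toMatrix₂_eq_diagonal hB, Fintype.sum_sum_type]
  simp [dotProduct, sub_eq_add_neg, Finset.sum_neg_distrib]

end Kernel

theorem neg_form_posdef_iff_siegel_general
    (n m : ℕ) (W : Type*) [AddCommGroup W] [Module ℂ W]
    (x : Module.Basis (Fin n ⊕ Fin m) ℂ W)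
    (H : W → W → ℂ)
    (Hadd : ∀ u v w : W, H (u + v) w = H u w + H v w)
    (Hsmul : ∀ (c : ℂ) (v w : W), H (c • v) w = c * H v w)
    (Hherm : ∀ v w : W, H w v = (starRingEnd ℂ) (H v w))
    (hgram : ∀ a a', H (x a) (x a') =
      if a = a' then Sum.elim (fun _ => (1 : ℂ)) (fun _ => (-1 : ℂ)) a else 0)
    (α : W →ₗ[ℂ] (Fin n → ℂ))
    (z : Matrix (Fin n) (Fin m) ℂ)
    (hz : ∀ i : Fin m, α (x (Sum.inr i)) = ∑ k : Fin n, z k i • α (x (Sum.inl k)))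
    (hbasis : LinearIndependent ℂ (fun k : Fin n => α (x (Sum.inl k)))) :
    (∀ v ∈ LinearMap.ker α, v ≠ 0 → 0 < (-(H v v)).re) ↔
      (1 - z * z.conjTranspose).PosDef := by
  have hB : LinearMap.toMatrix₂ x x (sesqFormOfHermitian H Hadd Hsmul Hherm) =
      Matrix.diagonal (Sum.elim (fun _ => 1) (fun _ => -1)) := by
    ext a a'
    simp [hgram, Matrix.diagonal_apply]
  have hreal (v : W) : 0 < (-(H v v)).re ↔ H v v < 0 := by
    have hv : ((H v v).re : ℂ) = H v v := Complex.conj_eq_iff_re.mp (Hherm v v).symm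
    rw [← hv, Complex.neg_re, Complex.ofReal_re, ← Complex.ofReal_zero, Complex.real_lt_real,
      neg_pos]
  simp_rw [hreal]
  rw [forall_mem_ker_ne_zero_iff x z hz hbasis, Matrix.posDef_one_sub_mul_conjTranspose_iff,
    Matrix.posDef_one_sub_conjTranspose_mul_self_iff]
  simp_rw [← sesqFormOfHermitian_apply H Hadd Hsmul Hherm, apply_kerVec_self x z hB, sub_neg]

/-- With `W = L ⊗_K ℂ`, `x` the image of a `K`-basis in which the Hermitian
form `H` has Gram matrix `E_{n,r−n}`, and `α` the surjection determined by the matrix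
`z`: the restriction of `−H` to `Ker α` is positive definite iff `Eₙ − z z̄ᵗ` is positive
definite Hermitian, i.e. iff `z` lies in the Siegel domain `H³_{n,r−n}`. -/
theorem neg_form_posdef_iff_siegel
    (n m : ℕ) (W : Type*) [AddCommGroup W] [Module ℂ W]
    (x : Module.Basis (Fin n ⊕ Fin m) ℂ W)
    (H : W → W → ℂ)
    (Hadd : ∀ u v w : W, H (u + v) w = H u w + H v w)
    (Hsmul : ∀ (c : ℂ) (v w : W), H (c • v) w = c * H v w)
    (Hherm : ∀ v w : W, H w v = (starRingEnd ℂ) (H v w))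
    (hgram : ∀ a a', H (x a) (x a') =
      if a = a' then Sum.elim (fun _ => (1 : ℂ)) (fun _ => (-1 : ℂ)) a else 0)
    (α : W →ₗ[ℂ] (Fin n → ℂ)) (hα : Function.Surjective α)
    (z : Matrix (Fin n) (Fin m) ℂ)
    (hz : ∀ i : Fin m, α (x (Sum.inr i)) = ∑ k : Fin n, z k i • α (x (Sum.inl k)))
    (hbasis : LinearIndependent ℂ (fun k : Fin n => α (x (Sum.inl k)))) :
    (∀ v ∈ LinearMap.ker α, v ≠ 0 → 0 < (-(H v v)).re) ↔
      (1 - z * z.conjTranspose).PosDef :=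
  neg_form_posdef_iff_siegel_general n m W x H Hadd Hsmul Hherm hgram α z hz hbasis
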